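/- arXiv:2212.13275 — 4 statements merged into one kernel-verified Lean document; each statement's English description precedes it below -/
import Mathlib

section
/- Let G be a group, H a complex Hilbert space, c ≥ 1, and let π be a group homomorphism from G into the invertible bounded linear operators on H with ‖π(s)‖ ≤ c for all s ∈ G. If ξ ∈ H is such that for every s ∈ G the vector π(s)ξ − ξ is π-invariant (i.e., π(t)(π(s)ξ − ξ) = π(s)ξ − ξ for all t ∈ G), then ξ itself is π-invariant: π(s)ξ = ξ for all s ∈ G. -/
theorem invariant_of_differences_invariant
    {G : Type*} [Group G] {H : Type*} [NormedAddCommGroup H]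
    [InnerProductSpace ℂ H] [CompleteSpace H]
    (c : ℝ) (hc : 1 ≤ c) (π : G →* (H →L[ℂ] H)ˣ)
    (hbd : ∀ s : G, ‖(π s : H →L[ℂ] H)‖ ≤ c) (ξ : H)
    (hinv : ∀ s t : G,
      (π t : H →L[ℂ] H) ((π s : H →L[ℂ] H) ξ - ξ) = (π s : H →L[ℂ] H) ξ - ξ) :
    ∀ s : G, (π s : H →L[ℂ] H) ξ = ξ := by
  intro s
  set η : H := (π s : H →L[ℂ] H) ξ - ξ with hη
  have key : ∀ n : ℕ, (π (s ^ n) : H →L[ℂ] H) ξ = ξ + (n : ℝ) • η := by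
    intro n
    induction n with
    | zero => simp
    | succ n ih =>
      have h1 : π (s ^ (n + 1)) = π (s ^ n) * π s := by rw [pow_succ, map_mul]
      have h2 : (π (s ^ (n + 1)) : H →L[ℂ] H) ξ
          = (π (s ^ n) : H →L[ℂ] H) ((π s : H →L[ℂ] H) ξ) := by
        rw [h1]; rfl
      have h3 : (π s : H →L[ℂ] H) ξ = ξ + η := by rw [hη]; abel
      have h4 : (π (s ^ n) : H →L[ℂ] H) η = η := hinv s (s ^ n)
      rw [h2, h3, map_add, h4, ih]
      push_cast
      rw [add_smul, one_smul]
      abel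
  have hbound : ∀ n : ℕ, (n : ℝ) * ‖η‖ ≤ (c + 1) * ‖ξ‖ := by
    intro n
    have h1 : ‖(n : ℝ) • η‖ ≤ ‖(π (s ^ n) : H →L[ℂ] H) ξ‖ + ‖ξ‖ := by
      have : (n : ℝ) • η = (π (s ^ n) : H →L[ℂ] H) ξ - ξ := by rw [key n]; abel
      rw [this]
      exact norm_sub_le _ _
    have h2 : ‖(π (s ^ n) : H →L[ℂ] H) ξ‖ ≤ c * ‖ξ‖ :=
      le_trans ((π (s ^ n) : H →L[ℂ] H).le_opNorm ξ)
        (mul_le_mul_of_nonneg_right (hbd _) (norm_nonneg _))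
    have h3 : ‖(n : ℝ) • η‖ = (n : ℝ) * ‖η‖ := by
      rw [norm_smul, Real.norm_natCast]
    linarith
  have hη0 : η = 0 := by
    by_contra hne
    have hpos : 0 < ‖η‖ := norm_pos_iff.mpr hne
    obtain ⟨n, hn⟩ := exists_nat_gt (((c + 1) * ‖ξ‖) / ‖η‖)
    have := hbound n
    have : ((c + 1) * ‖ξ‖) / ‖η‖ < (c + 1) * ‖ξ‖ / ‖η‖ := by
      calc ((c + 1) * ‖ξ‖) / ‖η‖ < (n : ℝ) := hn
        _ ≤ (c + 1) * ‖ξ‖ / ‖η‖ := (le_div_iff₀ hpos).mpr (hbound n)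
    exact lt_irrefl _ this
  have : (π s : H →L[ℂ] H) ξ - ξ = 0 := hη0
  exact sub_eq_zero.mp this
end

section
/- Let G be a locally compact group endowed with a left Haar measure, c ≥ 1, let π be a representation of G on a complex Hilbert space H which is a group homomorphism into the invertible bounded operators, continuous for the strong operator topology, with ‖π(s)‖ ≤ c for all s ∈ G, and let ξ, η ∈ H. Let K be the closed linear span of the set of Bochner integrals {∫_G f(s) π(s)ξ ds : f ∈ L¹(G)}. Then: (1) K is invariant under π(t) for every t ∈ G; (2) ξ ∈ K; and (3) for every t ∈ G, ⟨π(t)ξ, η⟩ = ⟨π(t)ξ, Pη⟩, where P is the orthogonal projection of H onto K. In particular, the coefficient φ(t) = ⟨π(t)ξ, η⟩ is a coefficient of the restriction of π to K, with ‖Pη‖ ≤ ‖η‖. -/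
open scoped ENNReal
open MeasureTheory

structure HilbRep (G : Type*) [Group G] [TopologicalSpace G] where
  (space : Type*)
  [normedAddCommGroup : NormedAddCommGroup space]
  [innerProductSpace : InnerProductSpace ℂ space]
  [completeSpace : CompleteSpace space]
  toFun : G →* (space →L[ℂ] space)ˣ

attribute [instance] HilbRep.normedAddCommGroup HilbRep.innerProductSpace HilbRep.completeSpace

namespace HilbRep

variable {G : Type*} [Group G] [TopologicalSpace G]

/-- The bounded invertible operator associated to a group element. -/
def op (π : HilbRep G) (s : G) : π.space →L[ℂ] π.space :=
  (π.toFun s : π.space →L[ℂ] π.space)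

/-- The representation is uniformly bounded by `c`. -/
def IsUB (π : HilbRep G) (c : ℝ) : Prop := ∀ s : G, ‖π.op s‖ ≤ c

/-- The representation is continuous for the strong operator topology. -/
def IsSOTContinuous (π : HilbRep G) : Prop :=
  ∀ ξ : π.space, Continuous fun s : G => π.op s ξ

/-- `π ∈ R_c(G)`: strongly continuous and uniformly bounded by `c`. -/
def IsRc (π : HilbRep G) (c : ℝ) : Prop := π.IsUB c ∧ π.IsSOTContinuous

/-- `π` almost has invariant vectors. -/
def AlmostInvariantVectors (π : HilbRep G) : Prop :=
  ∀ Q : Set G, IsCompact Q → ∀ ε : ℝ, 0 < ε →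
    ∃ ξ : π.space, ∀ s ∈ Q, ‖π.op s ξ - ξ‖ < ε * ‖ξ‖

/-- `π` has a nonzero invariant vector. -/
def HasInvariantVector (π : HilbRep G) : Prop :=
  ∃ ξ : π.space, ξ ≠ 0 ∧ ∀ s : G, π.op s ξ = ξ

end HilbRep

universe u v

/-- Property (T)_c. -/
def HasPropertyT (G : Type u) [Group G] [TopologicalSpace G] (c : ℝ) : Prop :=
  ∀ π : HilbRep.{u, v} G, π.IsRc c → π.AlmostInvariantVectors → π.HasInvariantVector

/-- The closed linear span of the Bochner integrals `∫ f(s) π(s)ξ ds`, `f ∈ L¹(G)`. -/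
noncomputable def cyclicSubspace {G : Type u} [Group G] [TopologicalSpace G]
    [MeasurableSpace G] (μ : Measure G) (π : HilbRep.{u, v} G) (ξ : π.space) :
    Submodule ℂ π.space :=
  (Submodule.span ℂ {x : π.space | ∃ f : G → ℂ, Integrable f μ ∧
    x = ∫ s, f s • π.op s ξ ∂μ}).topologicalClosure

instance cyclicSubspace.instCompleteSpace {G : Type u} [Group G] [TopologicalSpace G]
    [MeasurableSpace G] (μ : Measure G) (π : HilbRep.{u, v} G) (ξ : π.space) :
    CompleteSpace (cyclicSubspace μ π ξ) :=
  (Submodule.isClosed_topologicalClosure _).completeSpace_coe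

/-! Left invariance of Haar measure gives `π(t) ∫ f(s) π(s)ξ ds = ∫ f(t⁻¹s) π(s)ξ ds`, so `π(t)`
permutes the generators of `K` and hence preserves `K`. Integrating `s ↦ π(s)ξ` against normalised
indicators of small neighbourhoods of `1` gives averages that converge to `ξ` by strong continuity,
so `ξ ∈ K`. Finally `π(t)ξ ∈ K` is orthogonal to `η - Pη`. -/

open Topology

section Average

variable {X E : Type*} [MeasurableSpace X] {μ : Measure X} [NormedAddCommGroup E]

theorem norm_setAverage_sub_le [NormedSpace ℝ E] [CompleteSpace E] {s : Set X} (hs₀ : μ s ≠ 0)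
    (hs : μ s ≠ ∞) {v : X → E} (hv : IntegrableOn v s μ) {x : E} {ε : ℝ} (hε : ∀ y ∈ s, ‖v y - x‖ ≤ ε) :
    ‖⨍ y in s, v y ∂μ - x‖ ≤ ε := by
  have hμ : 0 < μ.real s := ENNReal.toReal_pos hs₀ hs
  have hsub : ⨍ y in s, v y ∂μ - x = (μ.real s)⁻¹ • ∫ y in s, (v y - x) ∂μ := by
    rw [integral_sub hv (integrableOn_const hs), setIntegral_const, smul_sub, ← setAverage_eq,
      smul_smul, inv_mul_cancel₀ hμ.ne', one_smul]
  calc ‖⨍ y in s, v y ∂μ - x‖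
      ≤ (μ.real s)⁻¹ * (ε * μ.real s) := by
        rw [hsub, norm_smul, Real.norm_of_nonneg (inv_nonneg.2 hμ.le)]
        gcongr
        exact norm_setIntegral_le_of_norm_le_const hs.lt_top hε
    _ = ε := by field_simp

variable [NormedSpace ℂ E]

theorem integral_indicator_smul_eq_setAverage {s : Set X} (hs : MeasurableSet s) (v : X → E) :
    ∫ y, s.indicator (fun _ ↦ ((μ.real s)⁻¹ : ℂ)) y • v y ∂μ = ⨍ y in s, v y ∂μ := by
  simp_rw [← Set.indicator_smul_apply_left]
  rw [integral_indicator hs, integral_smul, setAverage_eq, ← Complex.ofReal_inv, Complex.coe_smul]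

theorem mem_closure_integral_smul [CompleteSpace E] [TopologicalSpace X] [LocallyCompactSpace X]
    [OpensMeasurableSpace X] (μ : Measure X) [μ.IsOpenPosMeasure] [IsFiniteMeasureOnCompacts μ]
    {v : X → E} (hv : Continuous v) (x₀ : X) :
    v x₀ ∈ closure {y | ∃ f : X → ℂ, Integrable f μ ∧ y = ∫ x, f x • v x ∂μ} := by
  refine Metric.mem_closure_iff.2 fun ε hε ↦ ?_
  have hU : {x | dist (v x) (v x₀) ≤ ε / 2} ∈ 𝓝 x₀ :=
    (hv.tendsto x₀).eventually (Metric.closedBall_mem_nhds (v x₀) (half_pos hε))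
  obtain ⟨K, hK, hKU, hKc⟩ := local_compact_nhds hU
  set V := interior K
  have hV₀ : μ V ≠ 0 := (isOpen_interior.measure_pos μ ⟨x₀, mem_interior_iff_mem_nhds.2 hK⟩).ne'
  have hV : μ V ≠ ∞ := (measure_mono interior_subset).trans_lt hKc.measure_lt_top |>.ne
  have hVm : MeasurableSet V := isOpen_interior.measurableSet
  refine ⟨_, ⟨V.indicator fun _ ↦ ((μ.real V)⁻¹ : ℂ), (integrable_indicator_iff hVm).2
    (integrableOn_const hV), rfl⟩, ?_⟩
  rw [dist_comm, dist_eq_norm, integral_indicator_smul_eq_setAverage hVm]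
  calc ‖⨍ y in V, v y ∂μ - v x₀‖ ≤ ε / 2 :=
        norm_setAverage_sub_le hV₀ hV
          (hv.continuousOn.integrableOn_of_subset_isCompact hKc hVm interior_subset hV) fun y hy ↦ dist_eq_norm (v y) (v x₀) ▸ hKU (interior_subset hy)
    _ < ε := half_lt_self hε

end Average

namespace HilbRep

section Group

variable {G : Type*} [Group G] [TopologicalSpace G] (π : HilbRep G)

@[simp]
theorem op_one_apply (x : π.space) : π.op 1 x = x := by
  simp [op]

@[simp]
theorem op_mul_apply (s t : G) (x : π.space) : π.op (s * t) x = π.op s (π.op t x) := by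
  simp [op]

theorem op_integral_smul [MeasurableSpace G] [MeasurableMul G] (μ : Measure G)
    [μ.IsMulLeftInvariant] (f : G → ℂ) (ξ : π.space) (t : G) :
    π.op t (∫ s, f s • π.op s ξ ∂μ) = ∫ s, f (t⁻¹ * s) • π.op s ξ ∂μ :=
  calc π.op t (∫ s, f s • π.op s ξ ∂μ)
      = ∫ s, π.op t (f s • π.op s ξ) ∂μ :=
        (ContinuousLinearEquiv.integral_comp_comm (.ofUnit (π.toFun t)) _).symm
    _ = ∫ s, f (t⁻¹ * (t * s)) • π.op (t * s) ξ ∂μ := by simp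
    _ = ∫ s, f (t⁻¹ * s) • π.op s ξ ∂μ :=
        integral_mul_left_eq_self (fun s ↦ f (t⁻¹ * s) • π.op s ξ) t

end Group

variable {G : Type u} [Group G] [TopologicalSpace G] [MeasurableSpace G] (μ : Measure G)
  (π : HilbRep.{u, v} G) (ξ : π.space)

theorem cyclicSubspace_mem_invtSubmodule [MeasurableMul G] [μ.IsMulLeftInvariant] (t : G) :
    cyclicSubspace μ π ξ ∈ Module.End.invtSubmodule (π.op t : π.space →ₗ[ℂ] π.space) := by
  refine Submodule.topologicalClosure_mem_invtSubmodule (Set.MapsTo.submoduleSpan ?_)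
  rintro _ ⟨f, hf, rfl⟩
  exact ⟨fun s ↦ f (t⁻¹ * s), hf.comp_mul_left t⁻¹, π.op_integral_smul μ f ξ t⟩

theorem mem_cyclicSubspace [LocallyCompactSpace G] [OpensMeasurableSpace G] [μ.IsOpenPosMeasure]
    [IsFiniteMeasureOnCompacts μ] (hπ : π.IsSOTContinuous) : ξ ∈ cyclicSubspace μ π ξ := by
  have h := closure_mono (Submodule.subset_span (R := ℂ)) (mem_closure_integral_smul μ (hπ ξ) 1)
  rwa [op_one_apply] at h

end HilbRep

theorem cyclic_subspace_invariant_mem_and_projection_general {G : Type u} [Group G] [TopologicalSpace G]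
    [IsTopologicalGroup G] [LocallyCompactSpace G] [MeasurableSpace G] [BorelSpace G]
    (μ : Measure G) [μ.IsHaarMeasure] (c : ℝ)
    (π : HilbRep.{u, v} G) (hπ : π.IsRc c) (ξ η : π.space) :
    (∀ t : G, ∀ x ∈ cyclicSubspace μ π ξ, π.op t x ∈ cyclicSubspace μ π ξ) ∧
      ξ ∈ cyclicSubspace μ π ξ ∧
      (∀ t : G, (inner ℂ (π.op t ξ) η : ℂ) =
        inner ℂ (π.op t ξ) (((cyclicSubspace μ π ξ).orthogonalProjectionOnto η : cyclicSubspace μ π ξ) : π.space)) ∧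
      ‖(((cyclicSubspace μ π ξ).orthogonalProjectionOnto η : cyclicSubspace μ π ξ) : π.space)‖ ≤ ‖η‖ := by
  set K := cyclicSubspace μ π ξ
  have hinv (t : G) : ∀ x ∈ K, π.op t x ∈ K := π.cyclicSubspace_mem_invtSubmodule μ ξ t
  have hξ : ξ ∈ K := π.mem_cyclicSubspace μ ξ hπ.2
  refine ⟨hinv, hξ, fun t ↦ ?_, K.norm_orthogonalProjectionOnto_apply_le η⟩
  exact (K.inner_orthogonalProjectionOnto_eq_of_mem_left ⟨_, hinv t ξ hξ⟩ η).symm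

theorem cyclic_subspace_invariant_mem_and_projection {G : Type u} [Group G] [TopologicalSpace G]
    [IsTopologicalGroup G] [LocallyCompactSpace G] [MeasurableSpace G] [BorelSpace G]
    (μ : Measure G) [μ.IsHaarMeasure] (c : ℝ) (hc : 1 ≤ c)
    (π : HilbRep.{u, v} G) (hπ : π.IsRc c) (ξ η : π.space) :
    (∀ t : G, ∀ x ∈ cyclicSubspace μ π ξ, π.op t x ∈ cyclicSubspace μ π ξ) ∧
      ξ ∈ cyclicSubspace μ π ξ ∧
      (∀ t : G, (inner ℂ (π.op t ξ) η : ℂ) =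
        inner ℂ (π.op t ξ) (((cyclicSubspace μ π ξ).orthogonalProjectionOnto η : cyclicSubspace μ π ξ) : π.space)) ∧
      ‖(((cyclicSubspace μ π ξ).orthogonalProjectionOnto η : cyclicSubspace μ π ξ) : π.space)‖ ≤ ‖η‖ :=
  cyclic_subspace_invariant_mem_and_projection_general μ c π hπ ξ η
end

section
/- Let G be a locally compact, σ-compact group and c ≥ 1. If G has Property (FH)_c, then G has Property (T)_c. -/
/-!
Given almost invariant vectors, choose `η n` with `‖η n‖ = n + 1` that is `2⁻ⁿ`-invariant on the
`n`-th set of a compact exhaustion of `G`. Then `s ↦ (π s (η n) - η n)ₙ` is a continuous cocycle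
of the diagonal representation on `ℓ²(ℕ, H)`, although `η` itself is not in `ℓ²`. By (FH)_c it
has a fixed point `x`, and every `x n + η n` is `π`-invariant; they cannot all vanish, since
`‖x n‖ ≤ ‖x‖` while `‖η n‖ → ∞`.
-/

open scoped ENNReal
open MeasureTheory

universe u v

/-- Property (FH)_c: every continuous affine action with linear part in `R_c(G)`
has a fixed point. -/
def HasPropertyFH (G : Type u) [Group G] [TopologicalSpace G] (c : ℝ) : Prop :=
  ∀ π : HilbRep.{u, v} G, π.IsRc c → ∀ b : G → π.space, Continuous b →
    (∀ s t : G, b (s * t) = π.op s (b t) + b s) →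
    ∃ x : π.space, ∀ s : G, π.op s x + b s = x

open Filter

namespace lp

variable {𝕜 α : Type*} [NontriviallyNormedField 𝕜] {E : α → Type*} [∀ i, NormedAddCommGroup (E i)]
  {p : ℝ≥0∞} [Fact (1 ≤ p)]

theorem continuousOn_of_norm_apply_le [∀ i, CompleteSpace (E i)] (hp : p ≠ ∞) {X : Type*}
    [TopologicalSpace X] {f : X → lp E p} {s : Set X} (hf : ∀ i, ContinuousOn (fun x ↦ f x i) s)
    {u : α → ℝ} (hu : Summable u) (hfu : ∀ i, ∀ x ∈ s, ‖f x i‖ ≤ u i) : ContinuousOn f s := by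
  classical
  have hsum : ContinuousOn (fun x ↦ ∑' i, lp.single p i (f x i)) s :=
    continuousOn_tsum (fun i ↦ (lp.isometry_single i).continuous.comp_continuousOn (hf i)) hu
      fun i x hx ↦ (lp.norm_single (zero_lt_one.trans_le Fact.out) i _).trans_le (hfu i x hx)
  exact hsum.congr fun x _ ↦ (lp.hasSum_single hp (f x)).tsum_eq.symm

theorem continuous_apply_of_continuous_single [DecidableEq α] [∀ i, NormedSpace 𝕜 (E i)]
    {F : Type*} [NormedAddCommGroup F] [NormedSpace 𝕜 F] (hp : p ≠ ∞) {X : Type*}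
    [TopologicalSpace X] {T : X → lp E p →L[𝕜] F} {C : ℝ} (hT : ∀ x, ‖T x‖ ≤ C)
    (hsingle : ∀ i (a : E i), Continuous fun x ↦ T x (lp.single p i a)) (f : lp E p) :
    Continuous fun x ↦ T x f := by
  have hequi : Equicontinuous fun x ↦ ⇑(T x) :=
    (LipschitzWith.uniformEquicontinuous _ C.toNNReal fun x ↦
      (T x).lipschitzWith_of_opNorm_le ((hT x).trans C.le_coe_toNNReal)).equicontinuous
  have hclosed : IsClosed {v : lp E p | Continuous fun x ↦ T x v} := by
    simp only [continuous_iff_continuousAt, ContinuousAt, Set.ofPred_forall]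
    exact isClosed_iInter fun x₀ ↦ hequi.isClosed_setOfPred_tendsto (T x₀).continuous
  refine hclosed.mem_of_tendsto (lp.hasSum_single hp f) (Eventually.of_forall fun s ↦ ?_)
  simp only [Set.mem_ofPred_eq, map_sum]
  exact continuous_finsetSum s fun i _ ↦ hsingle i (f i)

variable (𝕜 α p) in
noncomputable def mapCLMMonoidHom (H : Type*) [NormedAddCommGroup H] [NormedSpace 𝕜 H] :
    (H →L[𝕜] H) →* (lp (fun _ : α ↦ H) p →L[𝕜] lp (fun _ : α ↦ H) p) where
  toFun T := lp.mapCLM p (fun _ ↦ T) (norm_nonneg T) fun _ ↦ le_rfl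
  map_one' := by ext; simp
  map_mul' _ _ := by ext; simp

section mapCLMMonoidHom

variable {H : Type*} [NormedAddCommGroup H] [NormedSpace 𝕜 H] (T : H →L[𝕜] H)

theorem mapCLMMonoidHom_apply_apply (f : lp (fun _ : α ↦ H) p) (i : α) :
    mapCLMMonoidHom 𝕜 α p H T f i = T (f i) := rfl

theorem mapCLMMonoidHom_single [DecidableEq α] (i : α) (a : H) :
    mapCLMMonoidHom 𝕜 α p H T (lp.single p i a) = lp.single p i (T a) := by
  ext j
  rw [mapCLMMonoidHom_apply_apply]
  obtain rfl | hj := eq_or_ne j i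
  · simp
  · simp [hj]

theorem norm_mapCLMMonoidHom_le : ‖mapCLMMonoidHom 𝕜 α p H T‖ ≤ ‖T‖ :=
  lp.norm_mapCLM_le _ _ (norm_nonneg T) fun _ ↦ le_rfl

end mapCLMMonoidHom

end lp

namespace HilbRep

variable {G : Type*} [Group G] [TopologicalSpace G] (π : HilbRep G)

theorem op_one : π.op 1 = 1 := congrArg Units.val (map_one π.toFun)

theorem op_mul (s t : G) : π.op (s * t) = π.op s * π.op t :=
  congrArg Units.val (map_mul π.toFun s t)

noncomputable def lpSum (ι : Type*) : HilbRep G where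
  space := lp (fun _ : ι ↦ π.space) 2
  toFun := (Units.map (lp.mapCLMMonoidHom ℂ ι 2 π.space)).comp π.toFun

theorem lpSum_op {ι : Type*} (s : G) :
    (π.lpSum ι).op s = lp.mapCLMMonoidHom ℂ ι 2 π.space (π.op s) := rfl

variable {π} {c : ℝ}

theorem IsUB.lpSum (h : π.IsUB c) (ι : Type*) : (π.lpSum ι).IsUB c := fun s ↦ by
  rw [lpSum_op]
  exact (lp.norm_mapCLMMonoidHom_le _).trans (h s)

theorem IsRc.lpSum (h : π.IsRc c) (ι : Type*) : (π.lpSum ι).IsRc c := by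
  classical
  refine ⟨h.1.lpSum ι, lp.continuous_apply_of_continuous_single
    (T := fun s ↦ lp.mapCLMMonoidHom ℂ ι 2 π.space (π.op s)) (by norm_num) (h.1.lpSum ι)
    fun i a ↦ ?_⟩
  simp only [lp.mapCLMMonoidHom_single]
  exact (lp.isometry_single i).continuous.comp (h.2 a)

section Coboundary

variable (π) {ι : Type*} (η : ι → π.space)

/-- The coboundary of `η`, computed coordinatewise; `η` itself need not lie in `ℓ²`. -/
def lpCoboundary (hη : ∀ s, Memℓp (fun i ↦ π.op s (η i) - η i) 2) (s : G) : (π.lpSum ι).space :=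
  ⟨fun i ↦ π.op s (η i) - η i, hη s⟩

variable {η} (hη : ∀ s, Memℓp (fun i ↦ π.op s (η i) - η i) 2)

theorem lpCoboundary_mul (s t : G) :
    π.lpCoboundary η hη (s * t) =
      (π.lpSum ι).op s (π.lpCoboundary η hη t) + π.lpCoboundary η hη s := by
  refine lp.ext (funext fun i ↦ ?_)
  change π.op (s * t) (η i) - η i = π.op s (π.op t (η i) - η i) + (π.op s (η i) - η i)
  rw [op_mul, mul_apply_eq_comp, map_sub]
  abel

theorem hasInvariantVector_of_fixedPoint_lpCoboundary (hunb : ¬BddAbove (Set.range fun i ↦ ‖η i‖))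
    {x : lp (fun _ : ι ↦ π.space) 2} (hx : ∀ s, (π.lpSum ι).op s x + π.lpCoboundary η hη s = x) :
    π.HasInvariantVector := by
  have hinv : ∀ i s, π.op s (x i + η i) = x i + η i := fun i s ↦ by
    have hxi : π.op s (x i) + (π.op s (η i) - η i) = x i :=
      congrFun (congrArg Subtype.val (hx s)) i
    calc π.op s (x i + η i) = π.op s (x i) + (π.op s (η i) - η i) + η i := by
          rw [map_add]; abel
      _ = x i + η i := by rw [hxi]
  by_contra hnone
  refine hunb ⟨‖x‖, ?_⟩
  rintro _ ⟨i, rfl⟩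
  have hzero : x i + η i = 0 := by_contra fun h ↦ hnone ⟨_, h, hinv i⟩
  calc ‖η i‖ = ‖x i‖ := by rw [eq_neg_of_add_eq_zero_right hzero, norm_neg]
    _ ≤ ‖x‖ := lp.norm_apply_le_norm two_ne_zero x i

end Coboundary

theorem IsUB.norm_op_sub_self_le (h : π.IsUB c) (s : G) (v : π.space) :
    ‖π.op s v - v‖ ≤ (c + 1) * ‖v‖ :=
  calc ‖π.op s v - v‖ ≤ ‖π.op s v‖ + ‖v‖ := norm_sub_le _ _
    _ ≤ c * ‖v‖ + ‖v‖ := by gcongr; exact (π.op s).le_of_opNorm_le (h s) v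
    _ = (c + 1) * ‖v‖ := by ring

theorem norm_op_smul_sub_smul (s : G) (a : ℝ) (v : π.space) :
    ‖π.op s (a • v) - a • v‖ = ‖a‖ * ‖π.op s v - v‖ := by
  rw [ContinuousLinearMap.map_smul_of_tower, ← smul_sub, norm_smul]

theorem AlmostInvariantVectors.exists_norm_eq_one (h : π.AlmostInvariantVectors) {Q : Set G}
    (hQ : IsCompact Q) {ε : ℝ} (hε : 0 < ε) :
    ∃ ξ : π.space, ‖ξ‖ = 1 ∧ ∀ s ∈ Q, ‖π.op s ξ - ξ‖ ≤ ε := by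
  obtain ⟨ξ, hξ⟩ := h (insert 1 Q) (hQ.insert 1) ε hε
  have hξ0 : 0 < ‖ξ‖ := by
    have := hξ 1 (Set.mem_insert _ _)
    rw [op_one, one_apply_eq_self, sub_self, norm_zero] at this
    exact pos_of_mul_pos_right this hε.le
  refine ⟨‖ξ‖⁻¹ • ξ, by rw [norm_smul, norm_inv, norm_norm, inv_mul_cancel₀ hξ0.ne'], fun s hs ↦ ?_⟩
  calc ‖π.op s (‖ξ‖⁻¹ • ξ) - ‖ξ‖⁻¹ • ξ‖ = ‖ξ‖⁻¹ * ‖π.op s ξ - ξ‖ := by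
        rw [norm_op_smul_sub_smul, norm_inv, norm_norm]
    _ ≤ ‖ξ‖⁻¹ * (ε * ‖ξ‖) := by gcongr; exact (hξ s (Set.mem_insert_of_mem _ hs)).le
    _ = ε := by field_simp

theorem AlmostInvariantVectors.exists_unbounded_seq (h : π.AlmostInvariantVectors)
    (K : CompactExhaustion G) :
    ∃ η : ℕ → π.space, ¬BddAbove (Set.range fun n ↦ ‖η n‖) ∧
      ∀ m n, m ≤ n → ∀ s ∈ K m, ‖π.op s (η n) - η n‖ ≤ (1 / 2) ^ n := by
  choose ξ hξ1 hξ using fun n : ℕ ↦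
    h.exists_norm_eq_one (K.isCompact n) (by positivity : (0 : ℝ) < (1 / 2) ^ n / (n + 1))
  refine ⟨fun n ↦ ((n : ℝ) + 1) • ξ n, fun ⟨C, hC⟩ ↦ ?_, fun m n hmn s hs ↦ ?_⟩
  · obtain ⟨n, hn⟩ := exists_nat_gt C
    have hnC : ‖((n : ℝ) + 1) • ξ n‖ ≤ C := hC ⟨n, rfl⟩
    rw [norm_smul, hξ1, mul_one, Real.norm_of_nonneg (by positivity)] at hnC
    linarith
  · calc ‖π.op s (((n : ℝ) + 1) • ξ n) - ((n : ℝ) + 1) • ξ n‖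
        _ = ((n : ℝ) + 1) * ‖π.op s (ξ n) - ξ n‖ := by
          rw [norm_op_smul_sub_smul, Real.norm_of_nonneg (by positivity)]
        _ ≤ ((n : ℝ) + 1) * ((1 / 2) ^ n / (n + 1)) := by gcongr; exact hξ n s (K.subset hmn hs)
        _ = (1 / 2) ^ n := by field_simp

section SummableCoboundary

variable (hUB : π.IsUB c) {K : CompactExhaustion G} {η : ℕ → π.space}
  (hη : ∀ m n, m ≤ n → ∀ s ∈ K m, ‖π.op s (η n) - η n‖ ≤ (1 / 2) ^ n)
include hUB hη

theorem exists_summable_norm_op_sub_self_le (m : ℕ) :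
    ∃ u : ℕ → ℝ, Summable u ∧ ∀ n, ∀ s ∈ K m, ‖π.op s (η n) - η n‖ ≤ u n := by
  refine ⟨fun n ↦ if n < m then (c + 1) * ‖η n‖ else (1 / 2) ^ n, ?_, fun n s hs ↦ ?_⟩
  · refine summable_geometric_two.of_norm_bounded_eventually ?_
    filter_upwards [Nat.cofinite_eq_atTop ▸ eventually_ge_atTop m] with n hn
    simp [not_lt.2 hn]
  · dsimp only
    split_ifs with hn
    · exact hUB.norm_op_sub_self_le s (η n)
    · exact hη m n (not_lt.1 hn) s hs

theorem memℓp_op_sub_self (s : G) : Memℓp (fun n ↦ π.op s (η n) - η n) 2 := by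
  obtain ⟨m, hm⟩ := K.exists_mem s
  obtain ⟨u, hu, hbound⟩ := exists_summable_norm_op_sub_self_le hUB hη m
  have h1 : Memℓp (fun n ↦ π.op s (η n) - η n) 1 :=
    memℓp_gen (by simpa using hu.of_nonneg_of_le (fun n ↦ norm_nonneg _) fun n ↦ hbound n s hm)
  exact h1.of_exponent_ge one_le_two

theorem continuous_lpCoboundary (hSOT : π.IsSOTContinuous) :
    Continuous (π.lpCoboundary η (memℓp_op_sub_self hUB hη)) := by
  refine continuous_iff_continuousAt.2 fun s₀ ↦ ?_
  obtain ⟨m, hm⟩ := K.exists_mem_nhds s₀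
  obtain ⟨u, hu, hbound⟩ := exists_summable_norm_op_sub_self_le hUB hη m
  exact (lp.continuousOn_of_norm_apply_le (by norm_num)
    (fun n ↦ ((hSOT (η n)).sub continuous_const).continuousOn) hu hbound).continuousAt hm

end SummableCoboundary

end HilbRep

theorem propertyT_of_propertyFH_general {G : Type u} [Group G] [TopologicalSpace G]
    [LocallyCompactSpace G] [SigmaCompactSpace G]
    (c : ℝ) (hFH : HasPropertyFH.{u, v} G c) :
    HasPropertyT.{u, v} G c := by
  intro π hπ hAIV
  obtain ⟨η, hη_unbdd, hη⟩ := hAIV.exists_unbounded_seq (CompactExhaustion.choice G)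
  have hmem := HilbRep.memℓp_op_sub_self hπ.1 hη
  obtain ⟨x, hx⟩ := hFH (π.lpSum ℕ) (hπ.lpSum ℕ) (π.lpCoboundary η hmem)
    (HilbRep.continuous_lpCoboundary hπ.1 hη hπ.2) (π.lpCoboundary_mul hmem)
  exact π.hasInvariantVector_of_fixedPoint_lpCoboundary hmem hη_unbdd hx

theorem propertyT_of_propertyFH {G : Type u} [Group G] [TopologicalSpace G]
    [IsTopologicalGroup G] [LocallyCompactSpace G] [SigmaCompactSpace G]
    (c : ℝ) (hc : 1 ≤ c) (hFH : HasPropertyFH.{u, v} G c) :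
    HasPropertyT.{u, v} G c :=
  propertyT_of_propertyFH_general c hFH
end

section
/- Let G be a locally compact group which is unitarisable. If G has Kazhdan's Property (T) (that is, Property (T)_1), then G has Property (T)_c for every c ≥ 1. -/
open scoped ENNReal
open MeasureTheory

universe u v

/-- `G` is unitarisable: every strongly continuous uniformly bounded representation is
conjugate, by a bounded invertible operator, to a unitary representation. -/
def Unitarisable (G : Type u) [Group G] [TopologicalSpace G] : Prop :=
  ∀ π : HilbRep.{u, v} G, π.IsSOTContinuous → (∃ c : ℝ, π.IsUB c) →
    ∃ S : π.space ≃L[ℂ] π.space, ∀ (s : G) (ξ : π.space), ‖S (π.op s (S.symm ξ))‖ = ‖ξ‖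

/-!
Conjugating a representation `π ∈ R_c(G)` by a bounded invertible operator `S` preserves strong
continuity, almost invariant vectors (up to the distortion `‖S‖ ‖S⁻¹‖` in the constants) and
nonzero invariant vectors (`η` is invariant for `SπS⁻¹` iff `S⁻¹η` is invariant for `π`).
Unitarisability provides an `S` making `SπS⁻¹` unitary, i.e. a member of `R_1(G)`, so
Property (T)_1 applied to `SπS⁻¹` yields an invariant vector for `π`.
-/

namespace HilbRep

variable {G : Type*} [Group G] [TopologicalSpace G]

-- Reducible, so that vectors of `π.space` can be fed to `(π.conj S).op` and rewritten.
abbrev conj (π : HilbRep G) (S : π.space ≃L[ℂ] π.space) : HilbRep G where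
  space := π.space
  toFun := (MulAut.conj ((ContinuousLinearEquiv.unitsEquiv ℂ π.space).symm S)).toMonoidHom.comp
    π.toFun

variable {π : HilbRep G} (S : π.space ≃L[ℂ] π.space)

theorem conj_op_apply (s : G) (ξ : π.space) : (π.conj S).op s ξ = S (π.op s (S.symm ξ)) :=
  rfl

theorem isUB_one_conj (hS : ∀ (s : G) (ξ : π.space), ‖S (π.op s (S.symm ξ))‖ = ‖ξ‖) :
    (π.conj S).IsUB 1 := fun s =>
  ContinuousLinearMap.opNorm_le_bound _ zero_le_one fun ξ => by
    rw [conj_op_apply, hS, one_mul]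

theorem IsSOTContinuous.conj (hπ : π.IsSOTContinuous) : (π.conj S).IsSOTContinuous := fun ξ =>
  S.continuous.comp (hπ (S.symm ξ))

theorem AlmostInvariantVectors.conj (hπ : π.AlmostInvariantVectors) :
    (π.conj S).AlmostInvariantVectors := by
  intro Q hQ ε hε
  set K := ‖(S : π.space →L[ℂ] π.space)‖ * ‖(S.symm : π.space →L[ℂ] π.space)‖
  have hK : 0 ≤ K := by positivity
  obtain ⟨ξ, hξ⟩ := hπ Q hQ (ε / (K + 1)) (by positivity)
  refine ⟨S ξ, fun s hs => ?_⟩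
  have hdefect := hξ s hs
  -- The defect bound is strict, so it rules out `ξ = 0`.
  have hSξ : 0 < ‖S ξ‖ := by
    have : ξ ≠ 0 := by rintro rfl; simp at hdefect
    simpa using this
  have hξ_le : ‖ξ‖ ≤ ‖(S.symm : π.space →L[ℂ] π.space)‖ * ‖S ξ‖ := by
    simpa using (S.symm : π.space →L[ℂ] π.space).le_opNorm (S ξ)
  calc ‖(π.conj S).op s (S ξ) - S ξ‖
      = ‖S (π.op s ξ - ξ)‖ := by rw [conj_op_apply, S.symm_apply_apply, map_sub]
    _ ≤ ‖(S : π.space →L[ℂ] π.space)‖ * ‖π.op s ξ - ξ‖ := (S : π.space →L[ℂ] π.space).le_opNorm _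
    _ ≤ ‖(S : π.space →L[ℂ] π.space)‖ * (ε / (K + 1) * ‖ξ‖) := by gcongr
    _ ≤ ‖(S : π.space →L[ℂ] π.space)‖ *
          (ε / (K + 1) * (‖(S.symm : π.space →L[ℂ] π.space)‖ * ‖S ξ‖)) := by gcongr
    _ = K / (K + 1) * (ε * ‖S ξ‖) := by ring
    _ < ε * ‖S ξ‖ := by
      apply mul_lt_of_lt_one_left (by positivity)
      rw [div_lt_one (by positivity)]
      linarith

theorem HasInvariantVector.of_conj (h : (π.conj S).HasInvariantVector) : π.HasInvariantVector := by
  obtain ⟨η, hη, hinv⟩ := h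
  refine ⟨S.symm η, by simpa using hη, fun s => S.injective ?_⟩
  rw [← conj_op_apply, S.apply_symm_apply, hinv s]

end HilbRep

theorem propertyT_all_of_unitarisable_general {G : Type u} [Group G] [TopologicalSpace G]
    (hU : Unitarisable.{u, v} G)
    (hT : HasPropertyT.{u, v} G 1) : ∀ c : ℝ, 1 ≤ c → HasPropertyT.{u, v} G c := by
  intro c _ π ⟨hbounded, hcont⟩ halmost
  obtain ⟨S, hS⟩ := hU π hcont ⟨c, hbounded⟩
  exact (hT (π.conj S) ⟨π.isUB_one_conj S hS, hcont.conj S⟩ (halmost.conj S)).of_conj S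

theorem propertyT_all_of_unitarisable {G : Type u} [Group G] [TopologicalSpace G]
    [IsTopologicalGroup G] [LocallyCompactSpace G] (hU : Unitarisable.{u, v} G)
    (hT : HasPropertyT.{u, v} G 1) : ∀ c : ℝ, 1 ≤ c → HasPropertyT.{u, v} G c :=
  propertyT_all_of_unitarisable_general hU hT
end
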